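/- Let q = 2^m with m ≥ 2, let S be a set of reduced residue classes modulo q with μ(S) = Σ_{a ∈ S} χ₄(a) = 0, and let P_S(x) = ∏_{p ≤ x, p odd prime, p mod q ∈ S} A(p). For each a ∈ S, assume there is a real number C(q,a) > 0 such that (log x)^{1/φ(q)} · ∏_{p ≤ x, p prime, p ≡ a (mod q)} (1 - 1/p) tends to C(q,a) as x → ∞, and let D(q,a) > 0 be the limit of ∏_{p ≤ x, p prime, p ≡ a (mod q)} (1 - 1/p²) as x → ∞. Then P_S(x) tends to ∏_{a ∈ S} (C(q,a)²/D(q,a))^{χ₄(a)} as x → ∞. -/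
import Mathlib


open Filter Finset

/-- χ₄(n) = 1 if n ≡ 1 (mod 4), and -1 otherwise (in particular -1 if n ≡ 3 (mod 4)),
as a real number. -/
noncomputable def chi4 (n : ℕ) : ℝ := if n % 4 = 1 then 1 else -1

/-- χ₄(n) as an integer, used as an exponent. -/
def chi4Int (n : ℕ) : ℤ := if n % 4 = 1 then 1 else -1

/-- A(p) = (p - χ₄(p)) / (p + χ₄(p)). -/
noncomputable def A (p : ℕ) : ℝ := ((p : ℝ) - chi4 p) / ((p : ℝ) + chi4 p)

private lemma aux_zpow_sum {x : ℝ} (hx : x ≠ 0) (s : Finset ℕ) (f : ℕ → ℤ) :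
    ∏ a ∈ s, x ^ f a = x ^ (∑ a ∈ s, f a) := by
  induction s using Finset.cons_induction with
  | empty => simp
  | cons a s ha ih => rw [Finset.prod_cons, Finset.sum_cons, zpow_add₀ hx, ih]

private lemma A_eq {p a : ℕ} (hp : p.Prime) (h4 : p % 4 = a % 4) :
    A p = ((1 - 1 / (p : ℝ)) ^ 2 / (1 - 1 / (p : ℝ) ^ 2)) ^ chi4Int a := by
  have hp2 : (2 : ℝ) ≤ (p : ℝ) := by exact_mod_cast hp.two_le
  have h0 : (p : ℝ) ≠ 0 := by linarith
  have h1 : (p : ℝ) + 1 ≠ 0 := by linarith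
  have h2 : (p : ℝ) - 1 ≠ 0 := by linarith
  have hden : (1 : ℝ) - 1 / (p : ℝ) ^ 2 ≠ 0 := by
    have hlt : 1 / (p : ℝ) ^ 2 < 1 := by
      rw [div_lt_one (by positivity)]
      nlinarith
    linarith
  have key : (1 - 1 / (p : ℝ)) ^ 2 / (1 - 1 / (p : ℝ) ^ 2)
      = ((p : ℝ) - 1) / ((p : ℝ) + 1) := by
    rw [div_eq_div_iff hden h1]
    field_simp
    ring
  unfold A chi4 chi4Int
  rw [h4]
  by_cases ha : a % 4 = 1
  · rw [if_pos ha, if_pos ha, zpow_one, key]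
  · rw [if_neg ha, if_neg ha, zpow_neg, zpow_one, key, inv_div]
    ring

theorem stmt_12 (m : ℕ) (hm : 2 ≤ m) (q : ℕ) (hq : q = 2 ^ m)
    (S : Finset ℕ) (hS : ∀ a ∈ S, a < q ∧ Nat.Coprime a q)
    (hbal : (∑ a ∈ S, chi4 a) = 0)
    (C D : ℕ → ℝ)
    (hC : ∀ a ∈ S, 0 < C a ∧ Tendsto (fun x : ℝ =>
        Real.log x ^ ((1 : ℝ) / (Nat.totient q : ℝ))
          * ∏ p ∈ (Finset.range (⌊x⌋₊ + 1)).filter (fun p => p.Prime ∧ p % q = a % q),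
              (1 - 1 / (p : ℝ)))
      atTop (nhds (C a)))
    (hD : ∀ a ∈ S, 0 < D a ∧ Tendsto (fun x : ℝ =>
        ∏ p ∈ (Finset.range (⌊x⌋₊ + 1)).filter (fun p => p.Prime ∧ p % q = a % q),
            (1 - 1 / (p : ℝ) ^ 2))
      atTop (nhds (D a))) :
    Tendsto (fun x : ℝ =>
        ∏ p ∈ (Finset.range (⌊x⌋₊ + 1)).filter
            (fun p => p.Prime ∧ Odd p ∧ p % q ∈ S), A p)
      atTop (nhds (∏ a ∈ S, (C a ^ 2 / D a) ^ chi4Int a)) := by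
  classical
  have hq4 : (4 : ℕ) ∣ q := by
    rw [hq, show (4:ℕ) = 2 ^ 2 by norm_num]
    exact pow_dvd_pow 2 hm
  have hq4' : 4 ≤ q := by
    rw [hq, show (4:ℕ) = 2 ^ 2 by norm_num]
    exact Nat.pow_le_pow_right (by norm_num) hm
  -- sum of integer characters is zero
  have hchiInt : ∀ a : ℕ, chi4 a = (chi4Int a : ℝ) := by
    intro a; unfold chi4 chi4Int; split <;> simp
  have hsum : ∑ a ∈ S, chi4Int a = 0 := by
    have : ((∑ a ∈ S, chi4Int a : ℤ) : ℝ) = 0 := by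
      push_cast
      rw [← hbal]
      exact Finset.sum_congr rfl fun a _ => (hchiInt a).symm
    exact_mod_cast this
  -- main combinatorial identity, for a fixed cutoff n
  have hmain : ∀ n : ℕ,
      ∏ p ∈ (Finset.range n).filter (fun p => p.Prime ∧ Odd p ∧ p % q ∈ S), A p
      = ∏ a ∈ S,
          ((∏ p ∈ (Finset.range n).filter (fun p => p.Prime ∧ p % q = a % q),
              (1 - 1 / (p : ℝ))) ^ 2
            / ∏ p ∈ (Finset.range n).filter (fun p => p.Prime ∧ p % q = a % q),
              (1 - 1 / (p : ℝ) ^ 2)) ^ chi4Int a := by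
    intro n
    have step1 : (Finset.range n).filter (fun p => p.Prime ∧ Odd p ∧ p % q ∈ S)
        = (Finset.range n).filter (fun p => p.Prime ∧ p % q ∈ S) := by
      apply Finset.filter_congr
      intro p _
      constructor
      · rintro ⟨h1, _, h3⟩; exact ⟨h1, h3⟩
      · rintro ⟨h1, h3⟩
        refine ⟨h1, ?_, h3⟩
        rcases h1.eq_two_or_odd' with h2 | hodd
        · exfalso
          subst h2
          have h2q : 2 % q = 2 := Nat.mod_eq_of_lt (by omega)
          rw [h2q] at h3
          have hcop := (hS 2 h3).2
          have : (2:ℕ) ∣ q := dvd_trans (by norm_num) hq4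
          exact absurd (hcop.eq_one_of_dvd this) (by norm_num)
        · exact hodd
    rw [step1]
    have hmap : ∀ p ∈ (Finset.range n).filter (fun p => p.Prime ∧ p % q ∈ S),
        p % q ∈ S := by
      intro p hp
      exact (Finset.mem_filter.mp hp).2.2
    rw [← Finset.prod_fiberwise_of_maps_to hmap A]
    apply Finset.prod_congr rfl
    intro a ha
    have haq : a % q = a := Nat.mod_eq_of_lt (hS a ha).1
    have hsets : ((Finset.range n).filter (fun p => p.Prime ∧ p % q ∈ S)).filter
          (fun p => p % q = a)
        = (Finset.range n).filter (fun p => p.Prime ∧ p % q = a % q) := by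
      rw [Finset.filter_filter]
      apply Finset.filter_congr
      intro p _
      rw [haq]
      constructor
      · rintro ⟨⟨h1, _⟩, h3⟩; exact ⟨h1, h3⟩
      · rintro ⟨h1, h3⟩; exact ⟨⟨h1, h3 ▸ ha⟩, h3⟩
    rw [hsets]
    have hAeq : ∀ p ∈ (Finset.range n).filter (fun p => p.Prime ∧ p % q = a % q),
        A p = ((1 - 1 / (p : ℝ)) ^ 2 / (1 - 1 / (p : ℝ) ^ 2)) ^ chi4Int a := by
      intro p hp
      obtain ⟨-, hpr, hpq⟩ := Finset.mem_filter.mp hp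
      have h4 : p % 4 = a % 4 := by
        rw [← Nat.mod_mod_of_dvd p hq4, hpq, Nat.mod_mod_of_dvd a hq4]
      exact A_eq hpr h4
    rw [Finset.prod_congr rfl hAeq, Finset.prod_zpow, Finset.prod_div_distrib,
      Finset.prod_pow]
  -- the limit of the reorganized product
  have htend : Tendsto (fun x : ℝ => ∏ a ∈ S,
      ((Real.log x ^ ((1 : ℝ) / (Nat.totient q : ℝ))
          * ∏ p ∈ (Finset.range (⌊x⌋₊ + 1)).filter (fun p => p.Prime ∧ p % q = a % q),
              (1 - 1 / (p : ℝ))) ^ 2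
        / ∏ p ∈ (Finset.range (⌊x⌋₊ + 1)).filter (fun p => p.Prime ∧ p % q = a % q),
            (1 - 1 / (p : ℝ) ^ 2)) ^ chi4Int a)
      atTop (nhds (∏ a ∈ S, (C a ^ 2 / D a) ^ chi4Int a)) := by
    apply tendsto_finset_prod
    intro a ha
    obtain ⟨hC0, hCt⟩ := hC a ha
    obtain ⟨hD0, hDt⟩ := hD a ha
    have h1 : Tendsto (fun x : ℝ =>
        (Real.log x ^ ((1 : ℝ) / (Nat.totient q : ℝ))
          * ∏ p ∈ (Finset.range (⌊x⌋₊ + 1)).filter (fun p => p.Prime ∧ p % q = a % q),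
              (1 - 1 / (p : ℝ))) ^ 2
        / ∏ p ∈ (Finset.range (⌊x⌋₊ + 1)).filter (fun p => p.Prime ∧ p % q = a % q),
            (1 - 1 / (p : ℝ) ^ 2)) atTop (nhds (C a ^ 2 / D a)) :=
      Tendsto.div (hCt.pow 2) hDt (ne_of_gt hD0)
    exact h1.zpow₀ _ (Or.inl (ne_of_gt (div_pos (pow_pos hC0 2) hD0)))
  apply htend.congr'
  filter_upwards [eventually_ge_atTop (2 : ℝ)] with x hx
  have hL : (0:ℝ) < Real.log x ^ ((1 : ℝ) / (Nat.totient q : ℝ)) :=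
    Real.rpow_pos_of_pos (Real.log_pos (by linarith)) _
  set L : ℝ := Real.log x ^ ((1 : ℝ) / (Nat.totient q : ℝ)) with hLdef
  have hL2 : L ^ 2 ≠ 0 := pow_ne_zero 2 (ne_of_gt hL)
  rw [hmain (⌊x⌋₊ + 1)]
  have : ∀ a ∈ S,
      ((L * ∏ p ∈ (Finset.range (⌊x⌋₊ + 1)).filter (fun p => p.Prime ∧ p % q = a % q),
          (1 - 1 / (p : ℝ))) ^ 2
        / ∏ p ∈ (Finset.range (⌊x⌋₊ + 1)).filter (fun p => p.Prime ∧ p % q = a % q),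
            (1 - 1 / (p : ℝ) ^ 2)) ^ chi4Int a
      = (L ^ 2) ^ chi4Int a *
        ((∏ p ∈ (Finset.range (⌊x⌋₊ + 1)).filter (fun p => p.Prime ∧ p % q = a % q),
            (1 - 1 / (p : ℝ))) ^ 2
          / ∏ p ∈ (Finset.range (⌊x⌋₊ + 1)).filter (fun p => p.Prime ∧ p % q = a % q),
              (1 - 1 / (p : ℝ) ^ 2)) ^ chi4Int a := by
    intro a _
    rw [mul_pow, mul_div_assoc, mul_zpow]
  rw [Finset.prod_congr rfl this, Finset.prod_mul_distrib,
    aux_zpow_sum hL2, hsum, zpow_zero, one_mul]
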